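/- arXiv:2501.05466 — 12 statements merged into one kernel-verified Lean document; each statement's English description precedes it below -/
import Mathlib

section
/- Suppose for each coalition C ⊆ AG a function out_C : S × JA_C → P(S) is given, and fix a state s ∈ S. Then the following three sets of conditions are equivalent: (1) (a) for every agent a, { out_a(s, σ_a) : σ_a ∈ JA_a } is a general cover of out_∅(s, ∅), and (b) for every nonempty coalition C and σ_C ∈ JA_C, out_C(s, σ_C) = ⋂{ out_a(s, σ_C|_a) : a ∈ C }; (2) (a) for every agent a, { out_a(s, σ_a) : σ_a ∈ JA_a } is a general cover of out_∅(s, ∅), and (b) for all disjoint coalitions C, D, all σ_C ∈ JA_C and σ_D ∈ JA_D, out_{C∪D}(s, σ_C ∪ σ_D) = out_C(s, σ_C) ∩ out_D(s, σ_D); (3) (a) for every coalition C and σ_C ∈ JA_C, out_C(s, σ_C) = ⋃{ out_AG(s, σ_AG) : σ_AG ∈ JA_AG, σ_C ⊆ σ_AG }, and (b) for every coalition C and all σ_C, σ'_C, σ''_C ∈ JA_C, if σ''_C is a fusion of σ_C and σ'_C then out_C(s, σ_C) ∩ out_C(s, σ'_C) ⊆ out_C(s, σ''_C). -/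
/-- Restriction of a joint action of `C` to a subcoalition `D ⊆ C`. -/
def restr {AG Ac : Type} {C D : Set AG} (h : D ⊆ C) (σ : ↥C → Ac) : ↥D → Ac :=
  fun a => σ ⟨a.1, h a.2⟩

open Classical in
/-- The common extension `σC ∪ σD` of joint actions of (disjoint) coalitions. -/
noncomputable def unionJA {AG Ac : Type} {C D : Set AG}
    (σC : ↥C → Ac) (σD : ↥D → Ac) : ↥(C ∪ D) → Ac :=
  fun a =>
    if h : a.1 ∈ C then σC ⟨a.1, h⟩
    else σD ⟨a.1, ((Set.mem_union _ _ _).mp a.2).resolve_left h⟩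

/-- The (unique) joint action of the empty coalition. -/
def emptyJA (AG Ac : Type) : ↥(∅ : Set AG) → Ac :=
  fun a => absurd a.2 (Set.notMem_empty a.1)

/-- Condition (1): the single-agent outcome families are general covers of
`out_∅(s, ∅)` and every nonempty coalition's outcome is the intersection of
its members' outcomes. -/
def Cond1 {AG S Ac : Type} (out : (C : Set AG) → S → (↥C → Ac) → Set S) (s : S) : Prop :=
  (∀ a : AG, ⋃₀ {Y : Set S | ∃ σ : ↥({a} : Set AG) → Ac, Y = out {a} s σ} =
      out ∅ s (emptyJA AG Ac)) ∧
  (∀ C : Set AG, C.Nonempty → ∀ σ : ↥C → Ac,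
    out C s σ = ⋂ a : ↥C, out {a.1} s (restr (Set.singleton_subset_iff.mpr a.2) σ))

/-- Condition (2): the single-agent outcome families are general covers of
`out_∅(s, ∅)` and outcomes compose over disjoint coalitions via intersection. -/
def Cond2 {AG S Ac : Type} (out : (C : Set AG) → S → (↥C → Ac) → Set S) (s : S) : Prop :=
  (∀ a : AG, ⋃₀ {Y : Set S | ∃ σ : ↥({a} : Set AG) → Ac, Y = out {a} s σ} =
      out ∅ s (emptyJA AG Ac)) ∧
  (∀ C D : Set AG, Disjoint C D → ∀ (σC : ↥C → Ac) (σD : ↥D → Ac),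
    out (C ∪ D) s (unionJA σC σD) = out C s σC ∩ out D s σD)

/-- Condition (3): every coalition's outcome is the union of the grand
coalition's outcomes over extending action profiles, and outcomes are closed
under fusions. -/
def Cond3 {AG S Ac : Type} (out : (C : Set AG) → S → (↥C → Ac) → Set S) (s : S) : Prop :=
  (∀ (C : Set AG) (σ : ↥C → Ac),
    out C s σ = {t : S | ∃ τ : ↥(Set.univ : Set AG) → Ac,
      (∀ a : ↥C, τ ⟨a.1, Set.mem_univ a.1⟩ = σ a) ∧ t ∈ out Set.univ s τ}) ∧
  (∀ (C : Set AG) (σ σ' σ'' : ↥C → Ac),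
    (∀ a : ↥C, σ'' a = σ a ∨ σ'' a = σ' a) →
    out C s σ ∩ out C s σ' ⊆ out C s σ'')

/-!
All three conditions are equivalent to the intersection form
`out_C(s, σ_C) = out_∅(s, ∅) ∩ ⋂_{a ∈ C} out_a(s, σ_C(a))` together with the covering
condition.
Condition (1) is this form for nonempty `C`, the covering condition supplying the factor
`out_∅(s, ∅)`. Condition (2) yields it by induction on the finite coalition, splitting off one
agent at a time. From the intersection form, a state of `out_C(s, σ_C)` lies in some
`out_a(s, σ_a)` for every agent `a` by the covering condition, and these choices extend `σ_C` to
a profile of the grand coalition, which gives (3). Conversely, under (3) two grand-coalition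
profiles witnessing membership in `out_C(s, σ_C)` and `out_D(s, σ_D)` fuse into a single one
extending `σ_C ∪ σ_D`, which gives (2).
-/

variable {AG S Ac : Type}

lemma restr_singleton_eq_const {C : Set AG} (σ : ↥C → Ac) (a : ↥C) :
    restr (Set.singleton_subset_iff.mpr a.2) σ = fun _ => σ a := by
  funext ⟨b, hb⟩
  obtain rfl : b = a.1 := hb
  rfl

lemma eq_const_of_singleton {a : AG} (σ : ↥({a} : Set AG) → Ac) :
    σ = fun _ => σ ⟨a, rfl⟩ := by
  funext ⟨b, hb⟩
  obtain rfl : b = a := hb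
  rfl

section unionJA

variable {C D : Set AG} (σC : ↥C → Ac) (σD : ↥D → Ac)

lemma unionJA_of_mem_left {x : ↥(C ∪ D)} (hx : x.1 ∈ C) :
    unionJA σC σD x = σC ⟨x, hx⟩ :=
  dif_pos hx

lemma unionJA_of_mem_right (hCD : Disjoint C D) {x : ↥(C ∪ D)} (hx : x.1 ∈ D) :
    unionJA σC σD x = σD ⟨x, hx⟩ :=
  dif_neg fun hxC => Set.disjoint_left.mp hCD hxC hx

end unionJA

variable {out : (C : Set AG) → S → (↥C → Ac) → Set S} {s : S}

variable (out s) in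
def AgentOutcomesCover : Prop :=
  ∀ a : AG, ⋃₀ {Y : Set S | ∃ σ : ↥({a} : Set AG) → Ac, Y = out {a} s σ} =
    out ∅ s (emptyJA AG Ac)

variable (out s) in
def IntersectionForm : Prop :=
  AgentOutcomesCover out s ∧
  ∀ (C : Set AG) (σ : ↥C → Ac),
    out C s σ = out ∅ s (emptyJA AG Ac) ∩ ⋂ a : ↥C, out {a.1} s (fun _ => σ a)

namespace AgentOutcomesCover

lemma mem_out_empty_iff (h : AgentOutcomesCover out s) (a : AG) {t : S} :
    t ∈ out ∅ s (emptyJA AG Ac) ↔ ∃ c : Ac, t ∈ out {a} s (fun _ => c) := by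
  rw [← h a]
  constructor
  · rintro ⟨_, ⟨σ, rfl⟩, ht⟩
    exact ⟨σ ⟨a, rfl⟩, eq_const_of_singleton σ ▸ ht⟩
  · rintro ⟨c, ht⟩
    exact ⟨_, ⟨_, rfl⟩, ht⟩

lemma iInter_subset_out_empty (h : AgentOutcomesCover out s) {C : Set AG} (hC : C.Nonempty)
    (σ : ↥C → Ac) : ⋂ a : ↥C, out {a.1} s (fun _ => σ a) ⊆ out ∅ s (emptyJA AG Ac) :=
  fun _ ht => (h.mem_out_empty_iff hC.some).mpr ⟨_, Set.mem_iInter.mp ht ⟨_, hC.some_mem⟩⟩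

end AgentOutcomesCover

lemma cond1_iff_intersectionForm : Cond1 out s ↔ IntersectionForm out s := by
  refine and_congr_right fun (hcov : AgentOutcomesCover out s) => ?_
  simp only [restr_singleton_eq_const]
  constructor
  · intro h C σ
    rcases C.eq_empty_or_nonempty with rfl | hC
    · rw [Subsingleton.elim σ (emptyJA AG Ac), Set.iInter_of_empty, Set.inter_univ]
    · rw [h C hC σ, Set.inter_eq_right.mpr (hcov.iInter_subset_out_empty hC σ)]
  · intro h C hC σ
    rw [h C σ, Set.inter_eq_right.mpr (hcov.iInter_subset_out_empty hC σ)]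

namespace IntersectionForm

lemma cond2 (h : IntersectionForm out s) : Cond2 out s := by
  refine ⟨h.1, fun C D hCD σC σD => Set.ext fun t => ?_⟩
  simp only [h.2 (C ∪ D), h.2 C, h.2 D, Set.mem_inter_iff, Set.mem_iInter]
  constructor
  · rintro ⟨hE, hU⟩
    refine ⟨⟨hE, fun a => ?_⟩, ⟨hE, fun a => ?_⟩⟩
    · have := hU ⟨a.1, Or.inl a.2⟩
      rwa [unionJA_of_mem_left σC σD a.2] at this
    · have := hU ⟨a.1, Or.inr a.2⟩
      rwa [unionJA_of_mem_right σC σD hCD a.2] at this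
  · rintro ⟨⟨hE, hC⟩, -, hD⟩
    refine ⟨hE, ?_⟩
    rintro ⟨x, hx | hx⟩
    · rw [unionJA_of_mem_left σC σD hx]
      exact hC ⟨x, hx⟩
    · rw [unionJA_of_mem_right σC σD hCD hx]
      exact hD ⟨x, hx⟩

lemma cond3 (h : IntersectionForm out s) : Cond3 out s := by
  constructor
  · intro C σ
    ext t
    rw [h.2 C σ]
    constructor
    · rintro ⟨hE, hC⟩
      choose g hg using fun x => (h.1.mem_out_empty_iff x).mp hE
      classical
      let τ : ↥(Set.univ : Set AG) → Ac := fun x =>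
        if hx : x.1 ∈ C then σ ⟨x.1, hx⟩ else g x.1
      refine ⟨τ, fun a => dif_pos a.2, ?_⟩
      rw [h.2]
      refine ⟨hE, Set.mem_iInter.mpr fun x => ?_⟩
      by_cases hx : x.1 ∈ C
      · simpa only [τ, dif_pos hx] using Set.mem_iInter.mp hC ⟨x.1, hx⟩
      · simpa only [τ, dif_neg hx] using hg x.1
    · rintro ⟨τ, hτσ, ht⟩
      rw [h.2] at ht
      refine ⟨ht.1, Set.mem_iInter.mpr fun a => ?_⟩
      rw [← hτσ a]
      exact Set.mem_iInter.mp ht.2 ⟨a.1, Set.mem_univ _⟩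
  · intro C σ σ' σ'' hfus t ⟨ht, ht'⟩
    rw [h.2] at ht ht' ⊢
    refine ⟨ht.1, Set.mem_iInter.mpr fun a => ?_⟩
    rcases hfus a with e | e <;> rw [e]
    exacts [Set.mem_iInter.mp ht.2 a, Set.mem_iInter.mp ht'.2 a]

end IntersectionForm

namespace Cond2

lemma out_insert (h : Cond2 out s) {x : AG} {C : Set AG} (hx : x ∉ C)
    (σ : ↥(insert x C) → Ac) :
    out (insert x C) s σ =
      out {x} s (fun _ => σ ⟨x, Set.mem_insert x C⟩) ∩
        out C s (restr (Set.subset_insert x C) σ) := by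
  have hσ : σ = unionJA (C := {x}) (fun _ => σ ⟨x, Set.mem_insert x C⟩)
      (restr (Set.subset_insert x C) σ) := by
    funext ⟨y, hy⟩
    unfold unionJA
    split
    next hyx => obtain rfl : y = x := hyx; rfl
    next => rfl
  -- `insert x C` and `{x} ∪ C` are definitionally equal, so `h.2` applies as it stands.
  exact (congrArg (out (insert x C) s) hσ).trans
    (h.2 {x} C (Set.disjoint_singleton_left.mpr hx) _ _)

lemma out_eq_of_finite (h : Cond2 out s) {C : Set AG} (hC : C.Finite) (σ : ↥C → Ac) :
    out C s σ = out ∅ s (emptyJA AG Ac) ∩ ⋂ a : ↥C, out {a.1} s (fun _ => σ a) := by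
  induction C, hC using Set.Finite.induction_on with
  | empty =>
    rw [Subsingleton.elim σ (emptyJA AG Ac), Set.iInter_of_empty, Set.inter_univ]
  | @insert x C hx _ ih =>
    ext t
    simp only [h.out_insert hx, ih, Set.mem_inter_iff, Set.mem_iInter]
    constructor
    · rintro ⟨htx, hE, hC⟩
      refine ⟨hE, ?_⟩
      rintro ⟨y, rfl | hy⟩
      exacts [htx, hC ⟨y, hy⟩]
    · rintro ⟨hE, hC⟩
      exact ⟨hC ⟨x, Set.mem_insert x C⟩, hE,
        fun y => hC ⟨y.1, Set.mem_insert_of_mem x y.2⟩⟩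

lemma intersectionForm [Finite AG] (h : Cond2 out s) : IntersectionForm out s :=
  ⟨h.1, fun C => h.out_eq_of_finite C.toFinite⟩

end Cond2

namespace Cond3

lemma agentOutcomesCover (h : Cond3 out s) : AgentOutcomesCover out s := by
  intro a
  ext t
  rw [h.1 ∅]
  constructor
  · rintro ⟨_, ⟨σ, rfl⟩, ht⟩
    rw [h.1] at ht
    obtain ⟨τ, -, hτ⟩ := ht
    exact ⟨τ, fun b => (Set.notMem_empty _ b.2).elim, hτ⟩
  · rintro ⟨τ, -, hτ⟩
    refine ⟨_, ⟨fun _ => τ ⟨a, Set.mem_univ a⟩, rfl⟩, ?_⟩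
    rw [h.1]
    refine ⟨τ, fun ⟨b, hb⟩ => ?_, hτ⟩
    obtain rfl : b = a := hb
    rfl

lemma out_union (h : Cond3 out s) {C D : Set AG} (hCD : Disjoint C D)
    (σC : ↥C → Ac) (σD : ↥D → Ac) :
    out (C ∪ D) s (unionJA σC σD) = out C s σC ∩ out D s σD := by
  ext t
  rw [h.1 (C ∪ D), h.1 C, h.1 D]
  constructor
  · rintro ⟨τ, hτ, ht⟩
    refine ⟨⟨τ, fun a => ?_, ht⟩, ⟨τ, fun a => ?_, ht⟩⟩
    · exact (hτ ⟨a.1, Or.inl a.2⟩).trans (unionJA_of_mem_left σC σD a.2)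
    · exact (hτ ⟨a.1, Or.inr a.2⟩).trans (unionJA_of_mem_right σC σD hCD a.2)
  · rintro ⟨⟨τ₁, hτ₁, ht₁⟩, ⟨τ₂, hτ₂, ht₂⟩⟩
    classical
    let τ : ↥(Set.univ : Set AG) → Ac := fun x => if x.1 ∈ C then τ₁ x else τ₂ x
    have htτ : t ∈ out Set.univ s τ :=
      h.2 Set.univ τ₁ τ₂ τ (fun _ => ite_eq_or_eq _ _ _) ⟨ht₁, ht₂⟩
    refine ⟨τ, ?_, htτ⟩
    intro x
    by_cases hx : x.1 ∈ C
    · rw [unionJA_of_mem_left σC σD hx, ← hτ₁ ⟨x.1, hx⟩]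
      exact if_pos hx
    · rw [unionJA_of_mem_right σC σD hCD (x.2.resolve_left hx), ← hτ₂ ⟨x.1, _⟩]
      exact if_neg hx

lemma cond2 (h : Cond3 out s) : Cond2 out s :=
  ⟨h.agentOutcomesCover, fun _ _ hCD => h.out_union hCD⟩

end Cond3

theorem three_equivalent_conditions_general
    {AG S Ac : Type} [Fintype AG]
    (out : (C : Set AG) → S → (↥C → Ac) → Set S) (s : S) :
    (Cond1 out s ↔ Cond2 out s) ∧ (Cond1 out s ↔ Cond3 out s) := by
  have h2 : Cond2 out s ↔ IntersectionForm out s :=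
    ⟨Cond2.intersectionForm, IntersectionForm.cond2⟩
  have h3 : Cond3 out s ↔ IntersectionForm out s :=
    ⟨fun h => h.cond2.intersectionForm, IntersectionForm.cond3⟩
  exact ⟨cond1_iff_intersectionForm.trans h2.symm, cond1_iff_intersectionForm.trans h3.symm⟩

/-- The three sets of conditions characterizing single-coalition-first action
models are equivalent. -/
theorem three_equivalent_conditions
    {AG S Ac : Type} [Fintype AG] [Nonempty AG] [Nonempty S] [Nonempty Ac]
    (out : (C : Set AG) → S → (↥C → Ac) → Set S) (s : S) :
    (Cond1 out s ↔ Cond2 out s) ∧ (Cond1 out s ↔ Cond3 out s) :=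
  three_equivalent_conditions_general out s
end

section
/- In every single-coalition-first neighborhood model, for every coalition C and every state s, the derived neighborhood nei_C(s) is a cover of suc(s). -/
/-- `Δ` is a general cover of `X` if `⋃ Δ = X`. -/
def IsGenCover {S : Type} (Δ : Set (Set S)) (X : Set S) : Prop := ⋃₀ Δ = X

/-- `Δ` is a cover of `X` if `⋃ Δ = X` and `∅ ∉ Δ`. -/
def IsCover {S : Type} (Δ : Set (Set S)) (X : Set S) : Prop :=
  ⋃₀ Δ = X ∧ ∅ ∉ Δ

open Classical in
/-- The derived neighborhood functions of a single-coalition-first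
neighborhood model: `nei_C(s) = ∅` if `suc(s) = ∅`; `nei_∅(s) = {suc(s)}` if
`suc(s) ≠ ∅`; and otherwise `nei_C(s)` consists of all nonempty intersections
of one member of `nei_a(s)` for each `a ∈ C`. -/
noncomputable def dNei {AG S : Type} (suc : S → Set S)
    (nei : AG → S → Set (Set S)) (C : Set AG) (s : S) : Set (Set S) :=
  if suc s = ∅ then ∅
  else if C = ∅ then {suc s}
  else {Y : Set S | Y.Nonempty ∧
    ∃ X : ↥C → Set S, (∀ a : ↥C, X a ∈ nei a.1 s) ∧ Y = ⋂ a : ↥C, X a}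

/-- In every single-coalition-first neighborhood model, for every coalition
`C` and state `s`, the derived neighborhood `nei_C(s)` is a cover of `suc(s)`. -/
theorem derived_neighborhoods_cover
    {AG S : Type} [Fintype AG] [Nonempty AG] [Nonempty S]
    (suc : S → Set S) (nei : AG → S → Set (Set S))
    (hnei : ∀ (a : AG) (s : S), IsCover (nei a s) (suc s)) :
    ∀ (C : Set AG) (s : S), IsCover (dNei suc nei C s) (suc s) := by
  intro C s
  unfold dNei
  by_cases hs : suc s = ∅
  · simp [hs, IsCover]
  · by_cases hC : C = ∅
    · simp only [hs, hC, if_neg, if_pos, if_false, if_true]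
      refine ⟨by simp, fun h => hs ?_⟩
      simpa using h.symm
    · simp only [hs, hC, if_false]
      constructor
      · ext t
        simp only [Set.mem_sUnion, Set.mem_setOf_eq]
        constructor
        · rintro ⟨Y, ⟨-, X, hX, rfl⟩, htY⟩
          obtain ⟨a⟩ := Set.nonempty_iff_ne_empty.mpr hC |>.to_subtype
          have hsub : X a ⊆ suc s := by
            rw [← (hnei a.1 s).1]
            exact Set.subset_sUnion_of_mem (hX a)
          exact hsub (Set.mem_iInter.mp htY a)
        · intro ht
          have : ∀ a : ↥C, ∃ X, X ∈ nei a.1 s ∧ t ∈ X := by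
            intro a
            have := (hnei a.1 s).1
            rw [← this] at ht
            exact ht
          choose X hX htX using this
          refine ⟨⋂ a : ↥C, X a, ⟨⟨t, Set.mem_iInter.mpr htX⟩, X, hX, rfl⟩,
            Set.mem_iInter.mpr htX⟩
      · rintro ⟨⟨t, ht⟩, -⟩
        exact ht
end

section
/- Let a grand-coalition-first action model be given and fix a state s. Then the following three conditions are equivalent: (1) for every agent a and all σ_a, σ'_a ∈ JA_a with σ_a ≠ σ'_a, out_a(s, σ_a) ∩ out_a(s, σ'_a) = ∅; (2) for every coalition C and all σ_C, σ'_C ∈ JA_C with σ_C ≠ σ'_C, out_C(s, σ_C) ∩ out_C(s, σ'_C) = ∅; (3) for all σ_AG, σ'_AG ∈ JA_AG with σ_AG ≠ σ'_AG, out_AG(s, σ_AG) ∩ out_AG(s, σ'_AG) = ∅. -/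
/-- The derived outcome function of a grand-coalition-first action model. -/
def dout {AG S Ac : Type} (outAG : S → (AG → Ac) → Set S)
    (C : Set AG) (s : S) (σ : ↥C → Ac) : Set S :=
  {t : S | ∃ τ : AG → Ac, (∀ a : ↥C, τ a.1 = σ a) ∧ t ∈ outAG s τ}

private lemma single_ne {AG Ac : Type} {a : AG} {σ σ' : ↥({a} : Set AG) → Ac}
    (h : σ ≠ σ') : σ ⟨a, rfl⟩ ≠ σ' ⟨a, rfl⟩ := by
  intro he
  apply h
  funext x
  obtain ⟨x, hx⟩ := x
  have : x = a := hx
  subst this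
  exact he

/-- In a grand-coalition-first action model, at a fixed state `s`, the
following are equivalent: (1) distinct actions of any single agent have
disjoint outcomes; (2) distinct joint actions of any coalition have disjoint
outcomes; (3) distinct action profiles have disjoint outcomes. -/
theorem clearness_three_equivalent_conditions
    {AG S Ac : Type} [Fintype AG] [Nonempty AG] [Nonempty S] [Nonempty Ac]
    (outAG : S → (AG → Ac) → Set S) (s : S) :
    ((∀ (a : AG) (σ σ' : ↥({a} : Set AG) → Ac), σ ≠ σ' →
        dout outAG {a} s σ ∩ dout outAG {a} s σ' = ∅) ↔
      (∀ (C : Set AG) (σ σ' : ↥C → Ac), σ ≠ σ' →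
        dout outAG C s σ ∩ dout outAG C s σ' = ∅)) ∧
    ((∀ (a : AG) (σ σ' : ↥({a} : Set AG) → Ac), σ ≠ σ' →
        dout outAG {a} s σ ∩ dout outAG {a} s σ' = ∅) ↔
      (∀ τ τ' : AG → Ac, τ ≠ τ' → outAG s τ ∩ outAG s τ' = ∅)) := by
  constructor
  · constructor
    · -- (1) → (2)
      intro h1 C σ σ' hne
      have : ∃ a : ↥C, σ a ≠ σ' a := by
        by_contra hc
        push_neg at hc
        exact hne (funext hc)
      obtain ⟨⟨a, ha⟩, hdiff⟩ := this
      ext t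
      simp only [Set.mem_inter_iff, Set.mem_empty_iff_false, iff_false, not_and]
      rintro ⟨τ, hτ, ht⟩ ⟨τ', hτ', ht'⟩
      have key := h1 a (fun _ => σ ⟨a, ha⟩) (fun _ => σ' ⟨a, ha⟩)
        (by intro he; exact hdiff (congrFun he ⟨a, rfl⟩))
      have h1t : t ∈ dout outAG {a} s (fun _ => σ ⟨a, ha⟩) :=
        ⟨τ, fun x => by rcases x with ⟨x, hx⟩; cases hx; exact hτ ⟨a, ha⟩, ht⟩
      have h2t : t ∈ dout outAG {a} s (fun _ => σ' ⟨a, ha⟩) :=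
        ⟨τ', fun x => by rcases x with ⟨x, hx⟩; cases hx; exact hτ' ⟨a, ha⟩, ht'⟩
      have := Set.ext_iff.mp key t
      simp only [Set.mem_inter_iff, Set.mem_empty_iff_false, iff_false, not_and] at this
      exact this h1t h2t
    · -- (2) → (1)
      intro h2 a σ σ' hne
      exact h2 {a} σ σ' hne
  · constructor
    · -- (1) → (3)
      intro h1 τ τ' hne
      have : ∃ a : AG, τ a ≠ τ' a := by
        by_contra hc
        push_neg at hc
        exact hne (funext hc)
      obtain ⟨a, hdiff⟩ := this
      have key := h1 a (fun _ => τ a) (fun _ => τ' a)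
        (by intro he; exact hdiff (congrFun he ⟨a, rfl⟩))
      ext t
      simp only [Set.mem_inter_iff, Set.mem_empty_iff_false, iff_false, not_and]
      intro ht ht'
      have h1t : t ∈ dout outAG {a} s (fun _ => τ a) :=
        ⟨τ, fun x => by rcases x with ⟨x, hx⟩; cases hx; rfl, ht⟩
      have h2t : t ∈ dout outAG {a} s (fun _ => τ' a) :=
        ⟨τ', fun x => by rcases x with ⟨x, hx⟩; cases hx; rfl, ht'⟩
      have := Set.ext_iff.mp key t
      simp only [Set.mem_inter_iff, Set.mem_empty_iff_false, iff_false, not_and] at this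
      exact this h1t h2t
    · -- (3) → (1)
      intro h3 a σ σ' hne
      have hdiff := single_ne hne
      ext t
      simp only [Set.mem_inter_iff, Set.mem_empty_iff_false, iff_false, not_and]
      rintro ⟨τ, hτ, ht⟩ ⟨τ', hτ', ht'⟩
      have hττ' : τ ≠ τ' := by
        intro he
        apply hdiff
        rw [← hτ ⟨a, rfl⟩, ← hτ' ⟨a, rfl⟩, he]
      have := Set.ext_iff.mp (h3 τ τ' hττ') t
      simp only [Set.mem_inter_iff, Set.mem_empty_iff_false, iff_false, not_and] at this
      exact this ht ht'
end

section
/- If a grand-coalition-first action model is clear, then for every coalition C and every state s, the family { out_C(s, σ_C) : σ_C ∈ JA_C } is a general partition of suc(s). -/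
/-- The successor function of a grand-coalition-first action model. -/
def gsuc {AG S Ac : Type} (outAG : S → (AG → Ac) → Set S) (s : S) : Set S :=
  {t : S | ∃ τ : AG → Ac, t ∈ outAG s τ}

/-- `Δ` is a general partition of `X` if `⋃ Δ = X` and distinct members of
`Δ` are disjoint. -/
def IsGenPartition {S : Type} (Δ : Set (Set S)) (X : Set S) : Prop :=
  ⋃₀ Δ = X ∧ ∀ Y ∈ Δ, ∀ Y' ∈ Δ, Y ≠ Y' → Y ∩ Y' = ∅

/-- If a grand-coalition-first action model is clear, then for every coalition
`C` and state `s`, the family `{ out_C(s, σ) : σ ∈ JA_C }` is a general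
partition of `suc(s)`. -/
theorem clear_implies_general_partition
    {AG S Ac : Type} [Fintype AG] [Nonempty AG] [Nonempty S] [Nonempty Ac]
    (outAG : S → (AG → Ac) → Set S)
    (hclear : ∀ (s : S) (τ τ' : AG → Ac), τ ≠ τ' →
      outAG s τ ∩ outAG s τ' = ∅) :
    ∀ (C : Set AG) (s : S),
      IsGenPartition {Y : Set S | ∃ σ : ↥C → Ac, Y = dout outAG C s σ}
        (gsuc outAG s) := by
  intro C s
  constructor
  · ext t
    constructor
    · rintro ⟨Y, ⟨σ, rfl⟩, τ, -, ht⟩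
      exact ⟨τ, ht⟩
    · rintro ⟨τ, ht⟩
      exact ⟨dout outAG C s (fun a => τ a.1), ⟨_, rfl⟩, τ, fun a => rfl, ht⟩
  · rintro Y ⟨σ, rfl⟩ Y' ⟨σ', rfl⟩ hne
    by_contra h
    rw [← Set.not_nonempty_iff_eq_empty] at h
    push_neg at h
    obtain ⟨t, ⟨τ, hτ, ht⟩, ⟨τ', hτ', ht'⟩⟩ := h
    have hττ' : τ = τ' := by
      by_contra hd
      have := hclear s τ τ' hd
      exact absurd (Set.mem_inter ht ht') (by simp [this])
    have hσ : σ = σ' := by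
      funext a
      rw [← hτ a, hττ', hτ' a]
    exact hne (by rw [hσ])
end

section
/- Every clear grand-coalition-first action model is a single-coalition-first action model: in a clear grand-coalition-first action model, the derived outcome functions satisfy out_∅(s, ∅) = suc(s) for every state s, and for every nonempty coalition C, every state s, and every σ_C ∈ JA_C, out_C(s, σ_C) = ⋂{ out_a(s, σ_C|_a) : a ∈ C } (and, for every agent a and state s, { out_a(s, σ_a) : σ_a ∈ JA_a } is a general cover of suc(s)). -/
/-- Every clear grand-coalition-first action model is a single-coalition-first
action model: its derived outcome functions satisfy `out_∅(s, ∅) = suc(s)`,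
for nonempty `C` we have `out_C(s, σ) = ⋂_{a ∈ C} out_a(s, σ|_a)`, and each
agent's outcome family is a general cover of `suc(s)`. -/
theorem clear_gcf_is_scf
    {AG S Ac : Type} [Fintype AG] [Nonempty AG] [Nonempty S] [Nonempty Ac]
    (outAG : S → (AG → Ac) → Set S)
    (hclear : ∀ (s : S) (τ τ' : AG → Ac), τ ≠ τ' →
      outAG s τ ∩ outAG s τ' = ∅) :
    (∀ (s : S) (σ₀ : ↥(∅ : Set AG) → Ac),
      dout outAG ∅ s σ₀ = gsuc outAG s) ∧
    (∀ (s : S) (C : Set AG), C.Nonempty → ∀ σ : ↥C → Ac,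
      dout outAG C s σ =
        ⋂ a : ↥C, dout outAG {a.1} s
          (restr (Set.singleton_subset_iff.mpr a.2) σ)) ∧
    (∀ (a : AG) (s : S),
      ⋃₀ {Y : Set S | ∃ σ : ↥({a} : Set AG) → Ac, Y = dout outAG {a} s σ} =
        gsuc outAG s) := by
  refine ⟨?_, ?_, ?_⟩
  · intro s σ₀
    ext t
    constructor
    · rintro ⟨τ, -, ht⟩; exact ⟨τ, ht⟩
    · rintro ⟨τ, ht⟩; exact ⟨τ, fun a => a.2.elim, ht⟩
  · intro s C hC σ
    ext t
    simp only [Set.mem_iInter]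
    constructor
    · rintro ⟨τ, hτ, ht⟩ a
      exact ⟨τ, fun b => by rcases b with ⟨b, hb⟩; cases hb; exact hτ a, ht⟩
    · intro h
      obtain ⟨a0, ha0⟩ := hC
      obtain ⟨τ, hτ, ht⟩ := h ⟨a0, ha0⟩
      refine ⟨τ, fun b => ?_, ht⟩
      obtain ⟨τ', hτ', ht'⟩ := h b
      have hee : τ = τ' := by
        by_contra hne
        have := hclear s τ τ' hne
        exact absurd (Set.eq_empty_iff_forall_notMem.mp this t ⟨ht, ht'⟩) (fun h => h)
      rw [hee]
      exact hτ' ⟨b.1, rfl⟩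
  · intro a s
    ext t
    constructor
    · rintro ⟨Y, ⟨σ, rfl⟩, τ, -, ht⟩
      exact ⟨τ, ht⟩
    · rintro ⟨τ, ht⟩
      exact ⟨dout outAG {a} s (fun x => τ x.1), ⟨fun x => τ x.1, rfl⟩,
        τ, fun x => rfl, ht⟩
end

section
/- Let a single-coalition-first neighborhood model be given, with derived neighborhood functions nei_C. Then the following two conditions are equivalent: (1) for every agent a and every state s, nei_a(s) is a partition of suc(s); (2) for every coalition C and every state s, nei_C(s) is a partition of suc(s). -/
/-- `Δ` is a partition of `X` if it is a cover of `X` and distinct members of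
`Δ` are disjoint. -/
def IsPartition {S : Type} (Δ : Set (Set S)) (X : Set S) : Prop :=
  IsCover Δ X ∧ ∀ Y ∈ Δ, ∀ Y' ∈ Δ, Y ≠ Y' → Y ∩ Y' = ∅

/-- In a single-coalition-first neighborhood model, every agent's
neighborhood is a partition of `suc(s)` at every state if and only if every
coalition's derived neighborhood is a partition of `suc(s)` at every state. -/
theorem agent_partitions_iff_coalition_partitions
    {AG S : Type} [Fintype AG] [Nonempty AG] [Nonempty S]
    (suc : S → Set S) (nei : AG → S → Set (Set S))
    (hnei : ∀ (a : AG) (s : S), IsCover (nei a s) (suc s)) :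
    (∀ (a : AG) (s : S), IsPartition (nei a s) (suc s)) ↔
    (∀ (C : Set AG) (s : S), IsPartition (dNei suc nei C s) (suc s)) := by
  have hsub : ∀ (a : AG) (s : S) (Y : Set S), Y ∈ nei a s → Y ⊆ suc s := by
    intro a s Y hY
    rw [← (hnei a s).1]
    exact Set.subset_sUnion_of_mem hY
  constructor
  · intro h C s
    by_cases hs : suc s = ∅
    · simp [IsPartition, IsCover, dNei, hs]
    · by_cases hC : C = ∅
      · subst hC
        refine ⟨⟨?_, ?_⟩, ?_⟩
        · simp [dNei, hs]
        · simp [dNei, hs]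
          exact fun h' => hs h'.symm
        · intro Y hY Y' hY' hne
          simp only [dNei, if_neg hs, if_pos rfl, Set.mem_singleton_iff] at hY hY'
          subst hY; subst hY'
          exact absurd rfl hne
      · have hmem : ∀ Y, Y ∈ dNei suc nei C s ↔ (Y.Nonempty ∧
            ∃ X : ↥C → Set S, (∀ a : ↥C, X a ∈ nei a.1 s) ∧ Y = ⋂ a : ↥C, X a) := by
          intro Y
          unfold dNei
          rw [if_neg hs, if_neg hC]
          rfl
        have hCne : Nonempty ↥C := (Set.nonempty_iff_ne_empty.2 hC).to_subtype
        refine ⟨⟨?_, ?_⟩, ?_⟩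
        · apply Set.eq_of_subset_of_subset
          · intro t ht
            obtain ⟨Y, hY, htY⟩ := ht
            obtain ⟨hYne, X, hX, rfl⟩ := (hmem Y).1 hY
            obtain ⟨a⟩ := hCne
            exact hsub a.1 s (X a) (hX a) (Set.mem_iInter.1 htY a)
          · intro t ht
            have hex : ∀ a : ↥C, ∃ Y ∈ nei a.1 s, t ∈ Y := by
              intro a
              have : t ∈ ⋃₀ nei a.1 s := by rw [(hnei a.1 s).1]; exact ht
              exact this
            choose X hX htX using hex
            refine ⟨⋂ a, X a, (hmem _).2 ⟨⟨t, Set.mem_iInter.2 htX⟩, X, hX, rfl⟩,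
              Set.mem_iInter.2 htX⟩
        · intro h'
          exact ((hmem ∅).1 h').1.ne_empty rfl
        · intro Y hY Y' hY' hne
          obtain ⟨hYne, X, hX, rfl⟩ := (hmem Y).1 hY
          obtain ⟨hYne', X', hX', rfl⟩ := (hmem Y').1 hY'
          by_contra hcon
          obtain ⟨t, ht⟩ := Set.nonempty_iff_ne_empty.2 hcon
          have heq : ∀ a : ↥C, X a = X' a := by
            intro a
            by_contra hXa
            have := (h a.1 s).2 (X a) (hX a) (X' a) (hX' a) hXa
            have ht1 : t ∈ X a := Set.mem_iInter.1 ht.1 a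
            have ht2 : t ∈ X' a := Set.mem_iInter.1 ht.2 a
            have : t ∈ X a ∩ X' a := ⟨ht1, ht2⟩
            rw [‹X a ∩ X' a = ∅›] at this
            exact this
          exact hne (by rw [funext heq])
  · intro h a s
    by_cases hs : suc s = ∅
    · have hempty : nei a s = ∅ := by
        rw [Set.eq_empty_iff_forall_notMem]
        intro Y hY
        have : Y = ∅ := Set.subset_eq_empty (hsub a s Y hY) hs
        exact (hnei a s).2 (this ▸ hY)
      refine ⟨hnei a s, ?_⟩
      simp [hempty]
    · have key : dNei suc nei {a} s = nei a s := by
        have hmem : ∀ Y, Y ∈ dNei suc nei ({a} : Set AG) s ↔ (Y.Nonempty ∧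
            ∃ X : ↥({a} : Set AG) → Set S, (∀ b : ↥({a} : Set AG), X b ∈ nei b.1 s) ∧
              Y = ⋂ b : ↥({a} : Set AG), X b) := by
          intro Y
          unfold dNei
          rw [if_neg hs, if_neg (Set.singleton_ne_empty a)]
          rfl
        ext Y
        rw [hmem]
        constructor
        · rintro ⟨hYne, X, hX, rfl⟩
          have : (⋂ b : ↥({a} : Set AG), X b) = X ⟨a, rfl⟩ := by
            apply Set.eq_of_subset_of_subset
            · exact Set.iInter_subset _ _
            · intro t ht
              apply Set.mem_iInter.2
              intro b
              have : b = ⟨a, rfl⟩ := Subtype.ext b.2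
              rw [this]; exact ht
          rw [this]
          exact hX ⟨a, rfl⟩
        · intro hY
          have hYne : Y.Nonempty := by
            rcases Set.eq_empty_or_nonempty Y with h' | h'
            · exact absurd (h' ▸ hY) (hnei a s).2
            · exact h'
          refine ⟨hYne, fun _ => Y, fun b => ?_, (Set.iInter_const Y).symm⟩
          have hb : b.1 = a := b.2
          simp only [hb]
          exact hY
      refine ⟨hnei a s, ?_⟩
      have := (h {a} s).2
      rw [key] at this
      exact this
end

section
/- Every clear single-coalition-first neighborhood model z-represents a clear grand-coalition-first action model: given a clear single-coalition-first neighborhood model on a state set S with derived neighborhood functions nei_C, there exist a nonempty type Ac of actions and an outcome function out_AG : S × JA_AG → P(S) such that the resulting grand-coalition-first action model is clear and its actual effectivity functions satisfy AE_C(s) = nei_C(s) for every coalition C and state s. -/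
/-- Every clear single-coalition-first neighborhood model z-represents a
clear grand-coalition-first action model: there are a nonempty type of
actions and an outcome function for the grand coalition such that the
resulting grand-coalition-first action model is clear and its actual
effectivity functions coincide with the derived neighborhood functions. -/
theorem clear_scf_nbhd_represents_clear_gcf_action
    {AG S : Type} [Fintype AG] [Nonempty AG] [Nonempty S]
    (suc : S → Set S) (nei : AG → S → Set (Set S))
    (hnei : ∀ (a : AG) (s : S), IsCover (nei a s) (suc s))
    (hclear : ∀ (a : AG) (s : S), IsPartition (nei a s) (suc s)) :
    ∃ (Ac : Type) (_ : Nonempty Ac) (outAG : S → (AG → Ac) → Set S),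
      (∀ (s : S) (τ τ' : AG → Ac), τ ≠ τ' → outAG s τ ∩ outAG s τ' = ∅) ∧
      (∀ (C : Set AG) (s : S),
        {Y : Set S | ∃ σ : ↥C → Ac, Y = dout outAG C s σ ∧ Y ≠ ∅} =
          dNei suc nei C s) := by
  classical
  -- actions are sets of states; the outcome of τ is the intersection of its
  -- components when each component is a neighborhood, and empty otherwise.
  refine ⟨Set S, ⟨∅⟩,
    fun s τ => {t | (∀ a, τ a ∈ nei a s) ∧ ∀ a, t ∈ τ a}, ?_, ?_⟩
  · intro s τ τ' hne
    ext t
    simp only [Set.mem_inter_iff, Set.mem_setOf_eq, Set.mem_empty_iff_false,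
      iff_false]
    rintro ⟨⟨h1, h2⟩, ⟨h1', h2'⟩⟩
    obtain ⟨a, ha⟩ := Function.ne_iff.mp hne
    have hdis := (hclear a s).2 (τ a) (h1 a) (τ' a) (h1' a) ha
    have : t ∈ τ a ∩ τ' a := ⟨h2 a, h2' a⟩
    rw [hdis] at this
    exact this
  · intro C s
    -- members of neighborhoods are in suc s
    have hsub : ∀ a (X : Set S), X ∈ nei a s → X ⊆ suc s := fun a X hX => by
      rw [← (hnei a s).1]; exact Set.subset_sUnion_of_mem hX
    by_cases hsuc : suc s = ∅
    · -- suc s empty: all neighborhood families are empty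
      have hneiE : ∀ a, nei a s = ∅ := by
        intro a
        ext X
        simp only [Set.mem_empty_iff_false, iff_false]
        intro hX
        have hXe : X = ∅ := Set.subset_empty_iff.mp (hsuc ▸ hsub a X hX)
        exact (hnei a s).2 (hXe ▸ hX)
      rw [dNei, if_pos hsuc]
      ext Y
      simp only [Set.mem_setOf_eq, Set.mem_empty_iff_false, iff_false, not_exists]
      rintro σ ⟨hY, hYne⟩
      apply hYne
      rw [hY]
      ext t
      simp only [dout, Set.mem_setOf_eq, Set.mem_empty_iff_false, iff_false]
      rintro ⟨τ, -, h1, -⟩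
      obtain ⟨a⟩ := ‹Nonempty AG›
      have := h1 a
      rw [hneiE a] at this
      exact this
    · by_cases hC : C = ∅
      · -- empty coalition
        subst hC
        rw [dNei, if_neg hsuc, if_pos rfl]
        have hdoutEq : ∀ σ : ↥(∅ : Set AG) → Set S,
            dout (fun s τ => {t | (∀ a, τ a ∈ nei a s) ∧ ∀ a, t ∈ τ a})
              (∅ : Set AG) s σ = suc s := by
          intro σ
          ext t
          simp only [dout, Set.mem_setOf_eq]
          constructor
          · rintro ⟨τ, -, h1, h2⟩
            obtain ⟨a⟩ := ‹Nonempty AG›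
            exact hsub a (τ a) (h1 a) (h2 a)
          · intro ht
            have hch : ∀ a, ∃ X ∈ nei a s, t ∈ X := by
              intro a
              have : t ∈ ⋃₀ nei a s := by rw [(hnei a s).1]; exact ht
              exact this
            choose X hX1 hX2 using hch
            exact ⟨X, fun a => absurd a.2 (Set.notMem_empty a.1), hX1, hX2⟩
        ext Y
        simp only [Set.mem_setOf_eq, Set.mem_singleton_iff]
        constructor
        · rintro ⟨σ, hY, -⟩
          rw [hY, hdoutEq]
        · intro hY
          refine ⟨fun a => absurd a.2 (Set.notMem_empty a.1), ?_, ?_⟩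
          · rw [hdoutEq]; exact hY
          · rw [hY]; exact hsuc
      · -- nonempty coalition
        rw [dNei, if_neg hsuc, if_neg hC]
        obtain ⟨a0, ha0⟩ := Set.nonempty_iff_ne_empty.mpr hC
        -- key: dout of σ, when all components are neighborhoods
        have hdout : ∀ σ : ↥C → Set S, (∀ a : ↥C, σ a ∈ nei a.1 s) →
            dout (fun s τ => {t | (∀ a, τ a ∈ nei a s) ∧ ∀ a, t ∈ τ a})
              C s σ = ⋂ a : ↥C, σ a := by
          intro σ hσ
          ext t
          simp only [dout, Set.mem_setOf_eq, Set.mem_iInter]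
          constructor
          · rintro ⟨τ, heq, -, h2⟩ a
            rw [← heq a]; exact h2 a.1
          · intro ht
            have hts : t ∈ suc s := hsub a0 (σ ⟨a0, ha0⟩) (hσ ⟨a0, ha0⟩) (ht ⟨a0, ha0⟩)
            have hch : ∀ a, ∃ X ∈ nei a s, t ∈ X := by
              intro a
              have : t ∈ ⋃₀ nei a s := by rw [(hnei a s).1]; exact hts
              exact this
            choose X hX1 hX2 using hch
            refine ⟨fun a => if h : a ∈ C then σ ⟨a, h⟩ else X a,
              fun a => by simp [a.2], fun a => ?_, fun a => ?_⟩
            · by_cases h : a ∈ C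
              · simpa [h] using hσ ⟨a, h⟩
              · simpa [h] using hX1 a
            · by_cases h : a ∈ C
              · simpa [h] using ht ⟨a, h⟩
              · simpa [h] using hX2 a
        ext Y
        simp only [Set.mem_setOf_eq]
        constructor
        · rintro ⟨σ, hY, hYne⟩
          -- all components of σ must be neighborhoods, else dout is empty
          have hσ : ∀ a : ↥C, σ a ∈ nei a.1 s := by
            by_contra hcon
            push_neg at hcon
            obtain ⟨a, ha⟩ := hcon
            apply hYne
            rw [hY]
            ext t
            simp only [dout, Set.mem_setOf_eq, Set.mem_empty_iff_false, iff_false]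
            rintro ⟨τ, heq, h1, -⟩
            exact ha (heq a ▸ h1 a.1)
          refine ⟨Set.nonempty_iff_ne_empty.mpr (hY ▸ hYne), σ, hσ, ?_⟩
          rw [hY, hdout σ hσ]
        · rintro ⟨hYne, X, hX, hYeq⟩
          refine ⟨X, ?_, Set.nonempty_iff_ne_empty.mp hYne⟩
          rw [hdout X hX, hYeq]
end

section
/- Let a grand-coalition-first action model be given. Then the following three conditions are equivalent: (1) there is a state r such that for every agent a and every state s there is a unique {a}-history from r to s; (2) there is a state r such that for every coalition C and every state s there is a unique C-history from r to s; (3) there is a state r such that for every state s there is a unique AG-history from r to s. -/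
/-- `cHist outAG C r L t` says that `L` (a list of pairs of joint actions of
`C` and states) is a `C`-history from `r` to `t`: at each step the joint
action is available (its outcome set is nonempty) and the next state is one
of its outcomes. The empty list is the one-state history from `r` to `r`. -/
def cHist {AG S Ac : Type} (outAG : S → (AG → Ac) → Set S) (C : Set AG) :
    S → List ((↥C → Ac) × S) → S → Prop
  | r, [], t => t = r
  | r, (σ, u) :: L, t =>
      dout outAG C r σ ≠ ∅ ∧ u ∈ dout outAG C r σ ∧ cHist outAG C u L t

namespace TreeLikeAux

variable {AG S Ac : Type} (outAG : S → (AG → Ac) → Set S)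

lemma cHist_append {C : Set AG} :
    ∀ (L M : List ((↥C → Ac) × S)) (r m t : S),
      cHist outAG C r L m → cHist outAG C m M t → cHist outAG C r (L ++ M) t
  | [], M, r, m, t, h1, h2 => by
      simp only [cHist] at h1; subst h1; simpa using h2
  | (σ, u) :: L, M, r, m, t, h1, h2 => by
      obtain ⟨h3, h4, h5⟩ := h1
      exact ⟨h3, h4, cHist_append L M u m t h5 h2⟩

/-- Convert a `C`-history into a `D`-history with the same state sequence. -/
lemma cHist_convert {C D : Set AG} :
    ∀ (L : List ((↥C → Ac) × S)) (r s : S), cHist outAG C r L s →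
      ∃ L' : List ((↥D → Ac) × S),
        cHist outAG D r L' s ∧ L'.map Prod.snd = L.map Prod.snd
  | [], r, s, h => ⟨[], h, rfl⟩
  | (σ, u) :: L, r, s, h => by
      obtain ⟨h1, h2, h3⟩ := h
      obtain ⟨τ, hτ1, hτ2⟩ := h2
      obtain ⟨L', hL1, hL2⟩ := cHist_convert L u s h3
      refine ⟨(fun a : ↥D => τ a.1, u) :: L',
        ⟨?_, ⟨τ, fun _ => rfl, hτ2⟩, hL1⟩, by simp [hL2]⟩
      exact Set.nonempty_iff_ne_empty.mp ⟨u, τ, fun _ => rfl, hτ2⟩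

/-- If full joint actions with a common outcome agree on `D`, then a
`D`-history is determined by its state sequence. -/
lemma statesDet {D : Set AG}
    (hE : ∀ (s u : S) (τ τ' : AG → Ac),
      u ∈ outAG s τ → u ∈ outAG s τ' → ∀ a ∈ D, τ a = τ' a) :
    ∀ (L L' : List ((↥D → Ac) × S)) (r s : S),
      cHist outAG D r L s → cHist outAG D r L' s →
      L.map Prod.snd = L'.map Prod.snd → L = L'
  | [], [], _, _, _, _, _ => rfl
  | [], _ :: _, _, _, _, _, hm => by simp at hm
  | _ :: _, [], _, _, _, _, hm => by simp at hm
  | (σ, u) :: L, (σ', u') :: L', r, s, h, h', hm => by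
      simp only [List.map_cons, List.cons.injEq] at hm
      obtain ⟨hu, hm⟩ := hm
      subst hu
      obtain ⟨-, ⟨τ, hτ1, hτ2⟩, h3⟩ := h
      obtain ⟨-, ⟨τ', hτ1', hτ2'⟩, h3'⟩ := h'
      have hσ : σ = σ' := by
        funext a
        rw [← hτ1 a, ← hτ1' a]
        exact hE r u τ τ' hτ2 hτ2' a.1 a.2
      rw [hσ, statesDet hE L L' u s h3 h3' hm]

/-- Uniqueness of `C`-histories from `r` forces full joint actions with a
common outcome to agree on `C`. -/
lemma edge_of_unique {C : Set AG} {r : S}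
    (hP : ∀ s : S, ∃! L : List ((↥C → Ac) × S), cHist outAG C r L s) :
    ∀ (s u : S) (τ τ' : AG → Ac),
      u ∈ outAG s τ → u ∈ outAG s τ' → ∀ a ∈ C, τ a = τ' a := by
  intro s u τ τ' h h' a ha
  obtain ⟨L, hL, -⟩ := hP s
  have step : ∀ ρ : AG → Ac, u ∈ outAG s ρ →
      cHist outAG C r (L ++ [(fun x : ↥C => ρ x.1, u)]) u := by
    intro ρ hρ
    exact cHist_append outAG L _ r s u hL
      ⟨Set.nonempty_iff_ne_empty.mp ⟨u, ρ, fun _ => rfl, hρ⟩,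
        ⟨ρ, fun _ => rfl, hρ⟩, rfl⟩
  obtain ⟨L₀, -, hU⟩ := hP u
  have heq := (hU _ (step τ h)).trans (hU _ (step τ' h')).symm
  have heq2 := List.append_cancel_left heq
  have : (fun x : ↥C => τ x.1) = fun x : ↥C => τ' x.1 :=
    congrArg Prod.fst (List.cons.inj heq2).1
  exact congrFun this ⟨a, ha⟩

/-- Transfer of unique-history conditions between coalitions. -/
lemma transfer {C D : Set AG} {r : S}
    (hP : ∀ s : S, ∃! L : List ((↥C → Ac) × S), cHist outAG C r L s)
    (hE : ∀ (s u : S) (τ τ' : AG → Ac),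
      u ∈ outAG s τ → u ∈ outAG s τ' → ∀ a ∈ D, τ a = τ' a) :
    ∀ s : S, ∃! L : List ((↥D → Ac) × S), cHist outAG D r L s := by
  intro s
  obtain ⟨L, hL, hU⟩ := hP s
  obtain ⟨L', hL', -⟩ := cHist_convert outAG L r s hL
  refine ⟨L', hL', ?_⟩
  intro M hM
  apply statesDet outAG hE M L' r s hM hL'
  obtain ⟨MC, hMC, hMm⟩ := cHist_convert outAG M r s hM
  obtain ⟨L'C, hL'C, hL'm⟩ := cHist_convert outAG L' r s hL'
  rw [← hMm, ← hL'm, hU MC hMC, hU L'C hL'C]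

end TreeLikeAux

open TreeLikeAux in
/-- For a grand-coalition-first action model the following are equivalent:
(1) some root has a unique `{a}`-history to every state for every agent `a`;
(2) some root has a unique `C`-history to every state for every coalition `C`;
(3) some root has a unique `AG`-history to every state. -/
theorem tree_like_three_equivalent_conditions
    {AG S Ac : Type} [Fintype AG] [Nonempty AG] [Nonempty S] [Nonempty Ac]
    (outAG : S → (AG → Ac) → Set S) :
    ((∃ r : S, ∀ (a : AG) (s : S),
        ∃! L : List ((↥({a} : Set AG) → Ac) × S), cHist outAG {a} r L s) ↔
      (∃ r : S, ∀ (C : Set AG) (s : S),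
        ∃! L : List ((↥C → Ac) × S), cHist outAG C r L s)) ∧
    ((∃ r : S, ∀ (a : AG) (s : S),
        ∃! L : List ((↥({a} : Set AG) → Ac) × S), cHist outAG {a} r L s) ↔
      (∃ r : S, ∀ s : S,
        ∃! L : List ((↥(Set.univ : Set AG) → Ac) × S),
          cHist outAG Set.univ r L s)) := by
  have a₀ : AG := Classical.arbitrary AG
  have AtoAll : (∃ r : S, ∀ (a : AG) (s : S),
      ∃! L : List ((↥({a} : Set AG) → Ac) × S), cHist outAG {a} r L s) →
      ∀ D : Set AG, ∃ r : S, ∀ s : S,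
        ∃! L : List ((↥D → Ac) × S), cHist outAG D r L s := by
    rintro ⟨r, hA⟩ D
    refine ⟨r, transfer outAG (hA a₀) ?_⟩
    intro s u τ τ' h h' a _
    exact edge_of_unique outAG (hA a) s u τ τ' h h' a rfl
  have GtoA : (∃ r : S, ∀ s : S,
      ∃! L : List ((↥(Set.univ : Set AG) → Ac) × S),
        cHist outAG Set.univ r L s) →
      ∃ r : S, ∀ (a : AG) (s : S),
        ∃! L : List ((↥({a} : Set AG) → Ac) × S), cHist outAG {a} r L s := by
    rintro ⟨r, hG⟩
    refine ⟨r, fun a => transfer outAG hG ?_⟩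
    intro s u τ τ' h h' b _
    exact edge_of_unique outAG hG s u τ τ' h h' b (Set.mem_univ b)
  constructor
  · constructor
    · intro hA
      obtain ⟨r, hA'⟩ := hA
      refine ⟨r, fun C => ?_⟩
      refine transfer outAG (hA' a₀) ?_
      intro s u τ τ' h h' a ha
      exact edge_of_unique outAG (hA' a) s u τ τ' h h' a rfl
    · rintro ⟨r, hB⟩
      exact ⟨r, fun a => hB {a}⟩
  · exact ⟨fun hA => AtoAll hA Set.univ, GtoA⟩
end

section
/- Every tree-like grand-coalition-first action model is clear: if a grand-coalition-first action model has a state r such that for every state s there is a unique AG-history from r to s, then for every state s and all σ_AG, σ'_AG ∈ JA_AG with σ_AG ≠ σ'_AG, out_AG(s, σ_AG) ∩ out_AG(s, σ'_AG) = ∅. -/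
lemma cHist_append {AG S Ac : Type} (outAG : S → (AG → Ac) → Set S) (C : Set AG)
    (σ : ↥C → Ac) :
    ∀ (L : List ((↥C → Ac) × S)) (r s t : S), cHist outAG C r L s →
      t ∈ dout outAG C s σ → cHist outAG C r (L ++ [(σ, t)]) t := by
  intro L
  induction L with
  | nil =>
    intro r s t h ht
    cases h
    exact ⟨Set.nonempty_iff_ne_empty.mp ⟨t, ht⟩, ht, rfl⟩
  | cons p L ih =>
    intro r s t h ht
    obtain ⟨h1, h2, h3⟩ := h
    exact ⟨h1, h2, ih _ _ _ h3 ht⟩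

/-- Every tree-like grand-coalition-first action model is clear: if some root
has a unique `AG`-history to every state, then distinct action profiles have
disjoint outcomes at every state. -/
theorem tree_like_implies_clear
    {AG S Ac : Type} [Fintype AG] [Nonempty AG] [Nonempty S] [Nonempty Ac]
    (outAG : S → (AG → Ac) → Set S)
    (htree : ∃ r : S, ∀ s : S,
      ∃! L : List ((↥(Set.univ : Set AG) → Ac) × S),
        cHist outAG Set.univ r L s) :
    ∀ (s : S) (τ τ' : AG → Ac), τ ≠ τ' → outAG s τ ∩ outAG s τ' = ∅ := by
  obtain ⟨r, hr⟩ := htree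
  intro s τ τ' hne
  by_contra h
  obtain ⟨t, ht, ht'⟩ := Set.nonempty_iff_ne_empty.mpr h
  obtain ⟨L, hL, -⟩ := hr s
  set σ : ↥(Set.univ : Set AG) → Ac := fun a => τ a.1 with hσ
  set σ' : ↥(Set.univ : Set AG) → Ac := fun a => τ' a.1 with hσ'
  have hd : t ∈ dout outAG Set.univ s σ := ⟨τ, fun a => rfl, ht⟩
  have hd' : t ∈ dout outAG Set.univ s σ' := ⟨τ', fun a => rfl, ht'⟩
  have h1 := cHist_append outAG Set.univ σ L r s t hL hd
  have h2 := cHist_append outAG Set.univ σ' L r s t hL hd'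
  obtain ⟨M, -, huniq⟩ := hr t
  have := (huniq _ h1).trans (huniq _ h2).symm
  have hσeq : σ = σ' := by
    have := List.append_inj_right this (rfl)
    simpa using this
  exact hne (funext fun a => congrFun hσeq ⟨a, trivial⟩)
end

section
/- Every tree-like single-coalition-first neighborhood model is clear: if a single-coalition-first neighborhood model has a state r such that for every agent a and every state s there is a unique {a}-history from r to s, then for every agent a and every state s, nei_a(s) is a partition of suc(s). -/
/-- `nHist suc nei C r L t` says that `L` (a list of pairs of a set of states
and a state) is a `C`-history from `r` to `t` in a single-coalition-first
neighborhood model: at each step the chosen set belongs to `nei_C` of the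
current state and the next state belongs to it. -/
def nHist {AG S : Type} (suc : S → Set S) (nei : AG → S → Set (Set S))
    (C : Set AG) : S → List (Set S × S) → S → Prop
  | r, [], t => t = r
  | r, (Y, u) :: L, t => Y ∈ dNei suc nei C r ∧ u ∈ Y ∧ nHist suc nei C u L t


lemma nHist_append {AG S : Type} (suc : S → Set S) (nei : AG → S → Set (Set S))
    (C : Set AG) : ∀ (L : List (Set S × S)) (r s t : S) (Y : Set S),
    nHist suc nei C r L s → Y ∈ dNei suc nei C s → t ∈ Y →
    nHist suc nei C r (L ++ [(Y, t)]) t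
  | [], r, s, t, Y, h, hY, ht => by
      cases h
      exact ⟨hY, ht, rfl⟩
  | (Z, u) :: L, r, s, t, Y, h, hY, ht => by
      exact ⟨h.1, h.2.1, nHist_append suc nei C L u s t Y h.2.2 hY ht⟩

/-- Every tree-like single-coalition-first neighborhood model is clear: if
some root has a unique `{a}`-history to every state for every agent `a`, then
every `nei_a(s)` is a partition of `suc(s)`. -/
theorem tree_like_nbhd_implies_clear
    {AG S : Type} [Fintype AG] [Nonempty AG] [Nonempty S]
    (suc : S → Set S) (nei : AG → S → Set (Set S))
    (hnei : ∀ (a : AG) (s : S), IsCover (nei a s) (suc s))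
    (htree : ∃ r : S, ∀ (a : AG) (s : S),
      ∃! L : List (Set S × S), nHist suc nei {a} r L s) :
    ∀ (a : AG) (s : S), IsPartition (nei a s) (suc s) := by
  intro a s
  refine ⟨hnei a s, ?_⟩
  intro Y hY Y' hY' hne
  by_contra h
  obtain ⟨t, htY, htY'⟩ := Set.nonempty_iff_ne_empty.2 h
  obtain ⟨r, hr⟩ := htree
  obtain ⟨L, hL, _⟩ := hr a s
  have hts : t ∈ suc s := by
    rw [← (hnei a s).1]; exact ⟨Y, hY, htY⟩
  have hsne : suc s ≠ ∅ := fun h0 => by simp [h0] at hts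
  have hane : ({a} : Set AG) ≠ ∅ := Set.singleton_ne_empty a
  have hdnei : ∀ Z : Set S, Z ∈ nei a s → t ∈ Z → Z ∈ dNei suc nei {a} s := by
    intro Z hZ htZ
    simp only [dNei, if_neg hsne, if_neg hane, Set.mem_setOf_eq]
    refine ⟨⟨t, htZ⟩, fun _ => Z, fun a' => ?_, ?_⟩
    · have : a'.1 = a := a'.2
      rw [this]; exact hZ
    · exact (Set.iInter_const Z).symm
  have h1 := nHist_append suc nei {a} L r s t Y hL (hdnei Y hY htY) htY
  have h2 := nHist_append suc nei {a} L r s t Y' hL (hdnei Y' hY' htY') htY'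
  obtain ⟨M, _, hMuniq⟩ := hr a t
  have := (hMuniq _ h1).trans (hMuniq _ h2).symm
  have h3 := List.append_cancel_left this
  simp only [List.cons.injEq, Prod.mk.injEq] at h3
  exact hne h3.1.1
end

section
/- Every tree-like single-coalition-first neighborhood model z-represents a tree-like grand-coalition-first action model: given a tree-like single-coalition-first neighborhood model on a state set S with derived neighborhood functions nei_C, there exist a nonempty type Ac of actions and an outcome function out_AG : S × JA_AG → P(S) such that the resulting grand-coalition-first action model is tree-like and its actual effectivity functions satisfy AE_C(s) = nei_C(s) for every coalition C and state s. -/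
section Aux

variable {AG S : Type}

open Classical in
noncomputable def myOut (nei : AG → S → Set (Set S)) (s : S) (τ : AG → Set S) : Set S :=
  if ∀ a, τ a ∈ nei a s then ⋂ a, τ a else ∅

lemma mem_nei_subset_suc {suc : S → Set S} {nei : AG → S → Set (Set S)}
    (hnei : ∀ a s, IsCover (nei a s) (suc s)) {a : AG} {s : S} {X : Set S}
    (hX : X ∈ nei a s) : X ⊆ suc s := by
  rw [← (hnei a s).1]; exact Set.subset_sUnion_of_mem hX

lemma exists_nei_mem {suc : S → Set S} {nei : AG → S → Set (Set S)}
    (hnei : ∀ a s, IsCover (nei a s) (suc s)) {s t : S} (ht : t ∈ suc s) (a : AG) :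
    ∃ X, X ∈ nei a s ∧ t ∈ X := by
  rw [← (hnei a s).1] at ht
  obtain ⟨X, hX, htX⟩ := ht
  exact ⟨X, hX, htX⟩

lemma dNei_singleton {suc : S → Set S} {nei : AG → S → Set (Set S)}
    (hnei : ∀ a s, IsCover (nei a s) (suc s)) (a : AG) (s : S) :
    dNei suc nei {a} s = nei a s := by
  unfold dNei
  by_cases hs : suc s = ∅
  · rw [if_pos hs]
    ext Y
    simp only [Set.mem_empty_iff_false, false_iff]
    intro hY
    have hsub : Y ⊆ suc s := mem_nei_subset_suc hnei hY
    rw [hs] at hsub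
    have : Y = ∅ := Set.subset_eq_empty hsub rfl
    exact (hnei a s).2 (this ▸ hY)
  · rw [if_neg hs, if_neg (by simp : ({a} : Set AG) ≠ ∅)]
    ext Y
    constructor
    · rintro ⟨hne, X, hX, rfl⟩
      have hYX : (⋂ b : ↥({a} : Set AG), X b) = X ⟨a, rfl⟩ := by
        apply subset_antisymm
        · exact Set.iInter_subset _ _
        · intro t ht
          apply Set.mem_iInter.2
          rintro ⟨b, hb⟩
          cases hb
          exact ht
      rw [hYX]
      exact hX ⟨a, rfl⟩
    · intro hY
      refine ⟨?_, fun _ => Y, ?_, ?_⟩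
      · exact Set.nonempty_iff_ne_empty.2 (fun h => (hnei a s).2 (h ▸ hY))
      · rintro ⟨b, hb⟩; cases hb; exact hY
      · have : Nonempty (↥({a} : Set AG)) := ⟨⟨a, rfl⟩⟩
        rw [Set.iInter_const]

lemma dout_eq_iInter {suc : S → Set S} {nei : AG → S → Set (Set S)}
    (hnei : ∀ a s, IsCover (nei a s) (suc s)) {C : Set AG} (hC : C.Nonempty)
    {s : S} {σ : ↥C → Set S} (hσ : ∀ a : ↥C, σ a ∈ nei a.1 s) :
    dout (myOut nei) C s σ = ⋂ a : ↥C, σ a := by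
  ext t
  constructor
  · rintro ⟨τ, hτσ, ht⟩
    unfold myOut at ht
    split_ifs at ht with h
    · apply Set.mem_iInter.2
      intro a
      rw [← hτσ a]
      exact Set.mem_iInter.1 ht a.1
    · exact absurd ht (Set.notMem_empty t)
  · intro ht
    have htC : ∀ a : ↥C, t ∈ σ a := fun a => Set.mem_iInter.1 ht a
    obtain ⟨a₀, ha₀⟩ := hC
    have hts : t ∈ suc s := mem_nei_subset_suc hnei (hσ ⟨a₀, ha₀⟩) (htC ⟨a₀, ha₀⟩)
    have hex : ∀ a : AG, ∃ X, X ∈ nei a s ∧ t ∈ X := fun a => exists_nei_mem hnei hts a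
    classical
    refine ⟨fun a => if h : a ∈ C then σ ⟨a, h⟩ else (hex a).choose, ?_, ?_⟩
    · intro a; simp only [dif_pos a.2]
    · unfold myOut
      rw [if_pos ?_]
      · apply Set.mem_iInter.2; intro a
        by_cases h : a ∈ C
        · simp only [dif_pos h]; exact htC ⟨a, h⟩
        · simp only [dif_neg h]; exact (hex a).choose_spec.2
      · intro a
        by_cases h : a ∈ C
        · simp only [dif_pos h]; exact hσ ⟨a, h⟩
        · simp only [dif_neg h]; exact (hex a).choose_spec.1

lemma dout_eq_empty {nei : AG → S → Set (Set S)} {C : Set AG}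
    {s : S} {σ : ↥C → Set S} {a : ↥C} (ha : σ a ∉ nei a.1 s) :
    dout (myOut nei) C s σ = ∅ := by
  ext t
  simp only [Set.mem_empty_iff_false, iff_false]
  rintro ⟨τ, hτσ, ht⟩
  unfold myOut at ht
  split_ifs at ht with h
  · exact ha (hτσ a ▸ h a.1)
  · exact Set.notMem_empty t ht

lemma dout_empty_coal [Nonempty AG] {suc : S → Set S} {nei : AG → S → Set (Set S)}
    (hnei : ∀ a s, IsCover (nei a s) (suc s))
    (s : S) (σ : ↥(∅ : Set AG) → Set S) :
    dout (myOut nei) ∅ s σ = suc s := by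
  ext t
  constructor
  · rintro ⟨τ, _, ht⟩
    unfold myOut at ht
    split_ifs at ht with h
    · have a₀ := Classical.arbitrary AG
      exact mem_nei_subset_suc hnei (h a₀) (Set.mem_iInter.1 ht a₀)
    · exact absurd ht (Set.notMem_empty t)
  · intro ht
    have hex : ∀ a : AG, ∃ X, X ∈ nei a s ∧ t ∈ X := fun a => exists_nei_mem hnei ht a
    refine ⟨fun a => (hex a).choose, ?_, ?_⟩
    · rintro ⟨a, ha⟩; exact absurd ha (Set.notMem_empty a)
    · unfold myOut
      rw [if_pos (fun a => (hex a).choose_spec.1)]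
      exact Set.mem_iInter.2 fun a => (hex a).choose_spec.2

lemma toAG_hist [Nonempty AG] {suc : S → Set S} {nei : AG → S → Set (Set S)}
    (hnei : ∀ a s, IsCover (nei a s) (suc s)) (a₀ : AG) :
    ∀ (L : List (Set S × S)) (r s : S), nHist suc nei {a₀} r L s →
      ∃ M : List ((↥(Set.univ : Set AG) → Set S) × S),
        cHist (myOut nei) Set.univ r M s := by
  intro L
  induction L with
  | nil => intro r s h; exact ⟨[], h⟩
  | cons p L ih =>
    obtain ⟨Y, u⟩ := p
    rintro r s ⟨hY, huY, htail⟩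
    rw [dNei_singleton hnei] at hY
    obtain ⟨M, hM⟩ := ih u s htail
    have hus : u ∈ suc r := mem_nei_subset_suc hnei hY huY
    have hex : ∀ a : AG, ∃ X, X ∈ nei a r ∧ u ∈ X := fun a => exists_nei_mem hnei hus a
    set σ : ↥(Set.univ : Set AG) → Set S := fun a => (hex a.1).choose with hσdef
    have hσ : ∀ a : ↥(Set.univ : Set AG), σ a ∈ nei a.1 r :=
      fun a => (hex a.1).choose_spec.1
    have hd : dout (myOut nei) Set.univ r σ = ⋂ a : ↥(Set.univ : Set AG), σ a :=
      dout_eq_iInter hnei ⟨Classical.arbitrary AG, Set.mem_univ _⟩ hσ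
    have hud : u ∈ dout (myOut nei) Set.univ r σ := by
      rw [hd]
      exact Set.mem_iInter.2 fun a => (hex a.1).choose_spec.2
    exact ⟨(σ, u) :: M, fun h => Set.notMem_empty u (h ▸ hud), hud, hM⟩

lemma proj_hist [Nonempty AG] {suc : S → Set S} {nei : AG → S → Set (Set S)}
    (hnei : ∀ a s, IsCover (nei a s) (suc s)) (a : AG) :
    ∀ (M : List ((↥(Set.univ : Set AG) → Set S) × S)) (r s : S),
      cHist (myOut nei) Set.univ r M s →
      nHist suc nei {a} r (M.map (fun p => (p.1 ⟨a, Set.mem_univ a⟩, p.2))) s := by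
  intro M
  induction M with
  | nil => intro r s h; exact h
  | cons p M ih =>
    obtain ⟨σ, u⟩ := p
    rintro r s ⟨hne, hu, htail⟩
    have hσ : ∀ b : ↥(Set.univ : Set AG), σ b ∈ nei b.1 r := by
      by_contra h
      push_neg at h
      obtain ⟨b, hb⟩ := h
      exact hne (dout_eq_empty hb)
    have hd : dout (myOut nei) Set.univ r σ = ⋂ b : ↥(Set.univ : Set AG), σ b :=
      dout_eq_iInter hnei ⟨Classical.arbitrary AG, Set.mem_univ _⟩ hσ
    rw [hd] at hu
    refine ⟨?_, Set.mem_iInter.1 hu ⟨a, Set.mem_univ a⟩, ih u s htail⟩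
    rw [dNei_singleton hnei]
    exact hσ ⟨a, Set.mem_univ a⟩

lemma proj_inj [Nonempty AG] :
    ∀ (M M' : List ((↥(Set.univ : Set AG) → Set S) × S)),
    (∀ a : AG, M.map (fun p => (p.1 ⟨a, Set.mem_univ a⟩, p.2))
       = M'.map (fun p => (p.1 ⟨a, Set.mem_univ a⟩, p.2))) → M = M' := by
  intro M
  induction M with
  | nil =>
    intro M' h
    cases M' with
    | nil => rfl
    | cons q M' => exact absurd (h (Classical.arbitrary AG)) (by simp)
  | cons p M ih =>
    intro M' h
    cases M' with
    | nil => exact absurd (h (Classical.arbitrary AG)) (by simp)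
    | cons q M' =>
      obtain ⟨σ, u⟩ := p
      obtain ⟨σ', u'⟩ := q
      simp only [List.map_cons, List.cons.injEq, Prod.mk.injEq] at h
      have hu : u = u' := (h (Classical.arbitrary AG)).1.2
      have hσ : σ = σ' := funext fun x => (h x.1).1.1
      rw [hu, hσ, ih M' (fun a => (h a).2)]

end Aux

/-- Every tree-like single-coalition-first neighborhood model z-represents a
tree-like grand-coalition-first action model: there are a nonempty type of
actions and an outcome function for the grand coalition such that the
resulting grand-coalition-first action model is tree-like and its actual
effectivity functions coincide with the derived neighborhood functions. -/
theorem tree_like_scf_nbhd_represents_tree_like_gcf_action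
    {AG S : Type} [Fintype AG] [Nonempty AG] [Nonempty S]
    (suc : S → Set S) (nei : AG → S → Set (Set S))
    (hnei : ∀ (a : AG) (s : S), IsCover (nei a s) (suc s))
    (htree : ∃ r : S, ∀ (a : AG) (s : S),
      ∃! L : List (Set S × S), nHist suc nei {a} r L s) :
    ∃ (Ac : Type) (_ : Nonempty Ac) (outAG : S → (AG → Ac) → Set S),
      (∃ r : S, ∀ s : S,
        ∃! L : List ((↥(Set.univ : Set AG) → Ac) × S),
          cHist outAG Set.univ r L s) ∧
      (∀ (C : Set AG) (s : S),
        {Y : Set S | ∃ σ : ↥C → Ac, Y = dout outAG C s σ ∧ Y ≠ ∅} =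
          dNei suc nei C s) := by
  obtain ⟨r, hr⟩ := htree
  refine ⟨Set S, ⟨∅⟩, myOut nei, ⟨r, fun s => ?_⟩, fun C s => ?_⟩
  · -- tree-likeness
    have a₀ := Classical.arbitrary AG
    obtain ⟨L₀, hL₀, _⟩ := hr a₀ s
    obtain ⟨M, hM⟩ := toAG_hist hnei a₀ L₀ r s hL₀
    refine ⟨M, hM, fun M' hM' => ?_⟩
    apply proj_inj
    intro a
    exact (hr a s).unique (proj_hist hnei a M' r s hM') (proj_hist hnei a M r s hM)
  · -- AE = dNei
    by_cases hC : C = ∅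
    · subst hC
      by_cases hs : suc s = ∅
      · unfold dNei
        rw [if_pos hs]
        ext Y
        simp only [Set.mem_setOf_eq, Set.mem_empty_iff_false, iff_false, not_exists]
        rintro σ ⟨hY, hYne⟩
        rw [dout_empty_coal hnei s σ, hs] at hY
        exact hYne hY
      · unfold dNei
        rw [if_pos rfl, if_neg hs]
        ext Y
        simp only [Set.mem_setOf_eq, Set.mem_singleton_iff]
        constructor
        · rintro ⟨σ, hY, _⟩
          rw [hY, dout_empty_coal hnei s σ]
        · intro hY
          refine ⟨fun a => absurd a.2 (Set.notMem_empty a.1), ?_, ?_⟩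
          · rw [dout_empty_coal hnei s _, hY]
          · rw [hY]; exact hs
    · have hCne : C.Nonempty := Set.nonempty_iff_ne_empty.2 hC
      ext Y
      simp only [Set.mem_setOf_eq]
      constructor
      · rintro ⟨σ, hY, hYne⟩
        have hσ : ∀ a : ↥C, σ a ∈ nei a.1 s := by
          by_contra h
          push_neg at h
          obtain ⟨b, hb⟩ := h
          exact hYne (hY.trans (dout_eq_empty hb))
        rw [dout_eq_iInter hnei hCne hσ] at hY
        obtain ⟨t, ht⟩ := Set.nonempty_iff_ne_empty.2 hYne
        obtain ⟨a₁, ha₁⟩ := hCne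
        have hts : t ∈ suc s := by
          rw [hY] at ht
          exact mem_nei_subset_suc hnei (hσ ⟨a₁, ha₁⟩) (Set.mem_iInter.1 ht ⟨a₁, ha₁⟩)
        unfold dNei
        rw [if_neg (by intro h; rw [h] at hts; exact Set.notMem_empty t hts), if_neg hC]
        exact ⟨Set.nonempty_iff_ne_empty.2 hYne, σ, hσ, hY⟩
      · intro hY
        unfold dNei at hY
        by_cases h1 : suc s = ∅
        · rw [if_pos h1] at hY
          exact absurd hY (Set.notMem_empty Y)
        · rw [if_neg h1, if_neg hC] at hY
          obtain ⟨hne, X, hX, hYe⟩ := hY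
          refine ⟨X, ?_, Set.nonempty_iff_ne_empty.1 hne⟩
          rw [dout_eq_iInter hnei hCne hX, hYe]
end

section
/- Let X be any subset of the three properties {seriality, independence, determinism}. For every pointed grand-coalition-first action model (M, s) (with a labeling lab : S → P(AP)) that satisfies all the properties in X, there exists a pointed tree-like grand-coalition-first action model (M', s') (with a labeling) that satisfies all the properties in X and such that for every formula φ of Φ, M, s ⊨ φ if and only if M', s' ⊨ φ. -/
/-- Formulas of the language Φ. -/
inductive Formula (AP AG : Type) : Type
  | top : Formula AP AG
  | atom : AP → Formula AP AG
  | neg : Formula AP AG → Formula AP AG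
  | conj : Formula AP AG → Formula AP AG → Formula AP AG
  | coal : Set AG → Formula AP AG → Formula AP AG

/-- Seriality: every coalition has an available joint action at every state. -/
def Serial {AG S Ac : Type} (outAG : S → (AG → Ac) → Set S) : Prop :=
  ∀ (C : Set AG) (s : S), ∃ σ : ↥C → Ac, dout outAG C s σ ≠ ∅

/-- Independence of agents: available joint actions of disjoint coalitions
can always be merged into an available joint action of their union. -/
def Independent {AG S Ac : Type} (outAG : S → (AG → Ac) → Set S) : Prop :=
  ∀ (s : S) (C D : Set AG), Disjoint C D → ∀ (σC : ↥C → Ac) (σD : ↥D → Ac),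
    dout outAG C s σC ≠ ∅ → dout outAG D s σD ≠ ∅ →
    dout outAG (C ∪ D) s (unionJA σC σD) ≠ ∅

/-- Determinism: every available joint action of the grand coalition has a
singleton outcome. -/
def Deterministic {AG S Ac : Type} (outAG : S → (AG → Ac) → Set S) : Prop :=
  ∀ (s : S) (σ : ↥(Set.univ : Set AG) → Ac),
    dout outAG Set.univ s σ ≠ ∅ →
    ∃ t : S, dout outAG Set.univ s σ = {t}

/-- Tree-likeness: some root has a unique `AG`-history to every state. -/
def TreeLike {AG S Ac : Type} (outAG : S → (AG → Ac) → Set S) : Prop :=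
  ∃ r : S, ∀ s : S,
    ∃! L : List ((↥(Set.univ : Set AG) → Ac) × S), cHist outAG Set.univ r L s

/-- Satisfaction in a grand-coalition-first action model: `⟨C⟩φ` holds at `s`
iff some available joint action of `C` (one with nonempty outcome) ensures
`φ`. -/
def gsat {AP AG S Ac : Type} (outAG : S → (AG → Ac) → Set S)
    (lab : S → Set AP) : S → Formula AP AG → Prop
  | _, Formula.top => True
  | s, Formula.atom p => p ∈ lab s
  | s, Formula.neg φ => ¬ gsat outAG lab s φ
  | s, Formula.conj φ ψ => gsat outAG lab s φ ∧ gsat outAG lab s ψ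
  | s, Formula.coal C φ => ∃ σ : ↥C → Ac,
      dout outAG C s σ ≠ ∅ ∧ ∀ t ∈ dout outAG C s σ, gsat outAG lab t φ

section TreeUnravel

variable {AG S Ac : Type}

/-- Last state of a history starting at `u`. -/
def lastS : S → List ((AG → Ac) × S) → S
  | u, [] => u
  | _, (_, t) :: L => lastS t L

/-- Validity of a history starting at `u`. -/
def ValidFrom (outAG : S → (AG → Ac) → Set S) : S → List ((AG → Ac) × S) → Prop
  | _, [] => True
  | u, (τ, t) :: L => t ∈ outAG u τ ∧ ValidFrom outAG t L

lemma lastS_append (u : S) (L : List ((AG → Ac) × S)) (τ : AG → Ac) (t : S) :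
    lastS u (L ++ [(τ, t)]) = t := by
  induction L generalizing u with
  | nil => rfl
  | cons q L ih => obtain ⟨τ', t'⟩ := q; exact ih t'

lemma validFrom_append (outAG : S → (AG → Ac) → Set S) (u : S)
    (L : List ((AG → Ac) × S)) (τ : AG → Ac) (t : S) :
    ValidFrom outAG u (L ++ [(τ, t)]) ↔
      ValidFrom outAG u L ∧ t ∈ outAG (lastS u L) τ := by
  induction L generalizing u with
  | nil => simp [ValidFrom, lastS]
  | cons q L ih =>
    obtain ⟨τ', t'⟩ := q
    simp only [List.cons_append, List.append_eq, ValidFrom, lastS, ih, and_assoc]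

/-- The type of valid histories from `s`. -/
def Hist (outAG : S → (AG → Ac) → Set S) (s : S) : Type :=
  {L : List ((AG → Ac) × S) // ValidFrom outAG s L}

/-- The unravelled outcome function. -/
def tout (outAG : S → (AG → Ac) → Set S) (s : S) :
    Hist outAG s → (AG → Ac) → Set (Hist outAG s) :=
  fun h τ => {h' | ∃ t ∈ outAG (lastS s h.1) τ, h'.1 = h.1 ++ [(τ, t)]}

lemma mem_dout_tout {outAG : S → (AG → Ac) → Set S} {s : S} {C : Set AG}
    {h h' : Hist outAG s} {σ : ↥C → Ac} :
    h' ∈ dout (tout outAG s) C h σ ↔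
      ∃ τ : AG → Ac, (∀ a : ↥C, τ a.1 = σ a) ∧
        ∃ t ∈ outAG (lastS s h.1) τ, h'.1 = h.1 ++ [(τ, t)] := Iff.rfl

/-- Build the extended history. -/
def extHist {outAG : S → (AG → Ac) → Set S} {s : S} (h : Hist outAG s)
    (τ : AG → Ac) (t : S) (ht : t ∈ outAG (lastS s h.1) τ) : Hist outAG s :=
  ⟨h.1 ++ [(τ, t)], (validFrom_append outAG s h.1 τ t).mpr ⟨h.2, ht⟩⟩

lemma dout_tout_ne {outAG : S → (AG → Ac) → Set S} {s : S} {C : Set AG}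
    (h : Hist outAG s) (σ : ↥C → Ac) :
    dout (tout outAG s) C h σ ≠ ∅ ↔ dout outAG C (lastS s h.1) σ ≠ ∅ := by
  rw [← Set.nonempty_iff_ne_empty, ← Set.nonempty_iff_ne_empty]
  constructor
  · rintro ⟨h', τ, hext, t, ht, -⟩
    exact ⟨t, τ, hext, ht⟩
  · rintro ⟨t, τ, hext, ht⟩
    exact ⟨extHist h τ t ht, τ, hext, t, ht, rfl⟩

lemma lastS_of_mem {outAG : S → (AG → Ac) → Set S} {s : S} {C : Set AG}
    {h h' : Hist outAG s} {σ : ↥C → Ac}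
    (hh' : h' ∈ dout (tout outAG s) C h σ) :
    lastS s h'.1 ∈ dout outAG C (lastS s h.1) σ := by
  obtain ⟨τ, hext, t, ht, he⟩ := hh'
  refine ⟨τ, hext, ?_⟩
  rw [he, lastS_append]
  exact ht

lemma gsat_tout {AP : Type} (outAG : S → (AG → Ac) → Set S) (lab : S → Set AP)
    (s : S) (φ : Formula AP AG) :
    ∀ h : Hist outAG s,
      gsat outAG lab (lastS s h.1) φ ↔
      gsat (tout outAG s) (fun h => lab (lastS s h.1)) h φ := by
  induction φ with
  | top => intro h; exact Iff.rfl
  | atom p => intro h; exact Iff.rfl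
  | neg φ ih => intro h; exact not_congr (ih h)
  | conj φ ψ ihφ ihψ => intro h; exact and_congr (ihφ h) (ihψ h)
  | coal C φ ih =>
    intro h
    constructor
    · rintro ⟨σ, hne, hall⟩
      refine ⟨σ, (dout_tout_ne h σ).mpr hne, fun h' hh' => ?_⟩
      exact (ih h').mp (hall _ (lastS_of_mem hh'))
    · rintro ⟨σ, hne, hall⟩
      refine ⟨σ, (dout_tout_ne h σ).mp hne, fun t ht => ?_⟩
      obtain ⟨τ, hext, htt⟩ := ht
      have hmem : extHist h τ t htt ∈ dout (tout outAG s) C h σ :=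
        ⟨τ, hext, t, htt, rfl⟩
      have hgs := hall _ hmem
      have hl : lastS s (extHist h τ t htt).1 = t := lastS_append _ _ _ _
      rw [← hl]
      exact (ih _).mpr hgs

lemma cHist_append_s19 {T : Type} (o : T → (AG → Ac) → Set T) (C : Set AG) :
    ∀ (L1 : List ((↥C → Ac) × T)) {r m t : T} {L2 : List ((↥C → Ac) × T)},
      cHist o C r L1 m → cHist o C m L2 t → cHist o C r (L1 ++ L2) t := by
  intro L1
  induction L1 with
  | nil =>
    intro r m t L2 h1 h2
    cases h1
    exact h2
  | cons q L1 ih =>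
    obtain ⟨σ, u⟩ := q
    rintro r m t L2 ⟨hne, hu, hrest⟩ h2
    exact ⟨hne, hu, ih hrest h2⟩

lemma cHist_tout_length {outAG : S → (AG → Ac) → Set S} {s : S} :
    ∀ (L : List ((↥(Set.univ : Set AG) → Ac) × Hist outAG s))
      (g t : Hist outAG s),
      cHist (tout outAG s) Set.univ g L t → t.1.length = g.1.length + L.length := by
  intro L
  induction L with
  | nil =>
    intro g t h
    cases h
    simp
  | cons q L ih =>
    obtain ⟨σ, u⟩ := q
    rintro g t ⟨-, hu, hrest⟩
    obtain ⟨τ, -, t', -, he⟩ := hu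
    have h1 : u.1.length = g.1.length + 1 := by rw [he]; simp
    have h2 := ih u t hrest
    simp only [List.length_cons]
    omega

lemma cHist_tout_prefix {outAG : S → (AG → Ac) → Set S} {s : S} :
    ∀ (L : List ((↥(Set.univ : Set AG) → Ac) × Hist outAG s))
      (g t : Hist outAG s),
      cHist (tout outAG s) Set.univ g L t → g.1 <+: t.1 := by
  intro L
  induction L with
  | nil =>
    intro g t h
    cases h
    exact List.prefix_refl _
  | cons q L ih =>
    obtain ⟨σ, u⟩ := q
    rintro g t ⟨-, hu, hrest⟩
    obtain ⟨τ, -, t', -, he⟩ := hu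
    have h1 : g.1 <+: u.1 := by rw [he]; exact ⟨[(τ, t')], rfl⟩
    exact h1.trans (ih u t hrest)

lemma cHist_tout_unique {outAG : S → (AG → Ac) → Set S} {s : S} :
    ∀ (L1 L2 : List ((↥(Set.univ : Set AG) → Ac) × Hist outAG s))
      (g t : Hist outAG s),
      cHist (tout outAG s) Set.univ g L1 t →
      cHist (tout outAG s) Set.univ g L2 t → L1 = L2 := by
  intro L1
  induction L1 with
  | nil =>
    intro L2 g t h1 h2
    cases h1
    have := cHist_tout_length L2 g g h2
    have : L2.length = 0 := by omega
    exact (List.length_eq_zero_iff.mp this).symm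
  | cons q1 L1 ih =>
    obtain ⟨σ1, u1⟩ := q1
    rintro L2 g t ⟨hne1, hu1, hrest1⟩ h2
    have hlen1 := cHist_tout_length (⟨σ1, u1⟩ :: L1) g t ⟨hne1, hu1, hrest1⟩
    have hlen2 := cHist_tout_length L2 g t h2
    match L2, h2 with
      | [], h2 =>
        exfalso
        simp only [List.length_cons, List.length_nil] at hlen1 hlen2
        omega
      | ⟨σ2, u2⟩ :: L2, h2 =>
        obtain ⟨-, hu2, hrest2⟩ := h2
        obtain ⟨τ1, hext1, t1, ht1, he1⟩ := hu1
        obtain ⟨τ2, hext2, t2, ht2, he2⟩ := hu2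
        -- u1 and u2 are prefixes of t of the same length
        have hp1 : u1.1 <+: t.1 := cHist_tout_prefix L1 u1 t hrest1
        have hp2 : u2.1 <+: t.1 := cHist_tout_prefix L2 u2 t hrest2
        have hlu : u1.1.length = u2.1.length := by rw [he1, he2]; simp
        have hueq1 : u1.1 = u2.1 :=
          (List.prefix_of_prefix_length_le hp1 hp2 (le_of_eq hlu)).eq_of_length hlu
        have hueq : u1 = u2 := Subtype.ext hueq1
        have hτ : τ1 = τ2 ∧ t1 = t2 := by
          have : g.1 ++ [(τ1, t1)] = g.1 ++ [(τ2, t2)] := by rw [← he1, ← he2, hueq1]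
          have := List.append_cancel_left this
          simp only [List.cons.injEq, Prod.mk.injEq] at this
          exact ⟨this.1.1, this.1.2⟩
        have hσ : σ1 = σ2 := by
          funext a
          rw [← hext1 a, hτ.1, hext2 a]
        subst hueq hσ
        rw [ih L2 u1 t hrest1 hrest2]

lemma cHist_tout_exists {outAG : S → (AG → Ac) → Set S} {s : S} :
    ∀ (Lh : List ((AG → Ac) × S)) (hv : ValidFrom outAG s Lh),
      ∃ L, cHist (tout outAG s) Set.univ
        (⟨[], trivial⟩ : Hist outAG s) L ⟨Lh, hv⟩ := by
  intro Lh
  induction Lh using List.reverseRecOn with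
  | nil => exact fun hv => ⟨[], rfl⟩
  | append_singleton L' q ih =>
    obtain ⟨τ, t⟩ := q
    intro hv
    obtain ⟨hv', ht⟩ := (validFrom_append outAG s L' τ t).mp hv
    obtain ⟨L0, hL0⟩ := ih hv'
    set hend : Hist outAG s := ⟨L' ++ [(τ, t)], hv⟩ with hhend
    have hmem : hend ∈ dout (tout outAG s) Set.univ
        (⟨L', hv'⟩ : Hist outAG s) (fun a => τ a.1) :=
      ⟨τ, fun a => rfl, t, ht, rfl⟩
    refine ⟨L0 ++ [(fun a => τ a.1, hend)], cHist_append_s19 _ _ L0 hL0 ?_⟩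
    exact ⟨Set.nonempty_iff_ne_empty.mp ⟨hend, hmem⟩, hmem, rfl⟩

end TreeUnravel

/-- For every subset `X` of the three properties seriality, independence and
determinism (encoded by the Booleans `cS`, `cI`, `cD`) and every pointed
grand-coalition-first action model satisfying the properties in `X`, there is
a pointed tree-like grand-coalition-first action model satisfying the
properties in `X` that satisfies exactly the same formulas. -/
theorem tree_like_equivalent_pointed_model
    {AG Ac AP : Type} [Fintype AG] [Nonempty AG] [Nonempty Ac] [Countable AP]
    (cS cI cD : Bool)
    (S : Type) [Nonempty S]
    (outAG : S → (AG → Ac) → Set S) (lab : S → Set AP) (s : S)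
    (hS : cS = true → Serial outAG)
    (hI : cI = true → Independent outAG)
    (hD : cD = true → Deterministic outAG) :
    ∃ (S' : Type) (_ : Nonempty S')
      (outAG' : S' → (AG → Ac) → Set S') (lab' : S' → Set AP) (s' : S'),
      TreeLike outAG' ∧
      (cS = true → Serial outAG') ∧
      (cI = true → Independent outAG') ∧
      (cD = true → Deterministic outAG') ∧
      (∀ φ : Formula AP AG, gsat outAG lab s φ ↔ gsat outAG' lab' s' φ) := by
  refine ⟨Hist outAG s, ⟨⟨[], trivial⟩⟩, tout outAG s,
    fun h => lab (lastS s h.1), ⟨[], trivial⟩, ?_, ?_, ?_, ?_, ?_⟩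
  · -- TreeLike
    refine ⟨⟨[], trivial⟩, fun h => ?_⟩
    obtain ⟨Lh, hv⟩ := h
    obtain ⟨L, hL⟩ := cHist_tout_exists Lh hv
    exact ⟨L, hL, fun L' hL' => cHist_tout_unique L' L _ _ hL' hL⟩
  · -- Serial
    intro hc C h
    obtain ⟨σ, hne⟩ := hS hc C (lastS s h.1)
    exact ⟨σ, (dout_tout_ne h σ).mpr hne⟩
  · -- Independent
    intro hc h C D hdisj σC σD h1 h2
    rw [dout_tout_ne] at h1 h2 ⊢
    exact hI hc (lastS s h.1) C D hdisj σC σD h1 h2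
  · -- Deterministic
    intro hc h σ hne
    have hne' := (dout_tout_ne h σ).mp hne
    obtain ⟨t, hts⟩ := hD hc (lastS s h.1) σ hne'
    set τ0 : AG → Ac := fun b => σ ⟨b, Set.mem_univ b⟩ with hτ0
    have hext0 : ∀ a : ↥(Set.univ : Set AG), τ0 a.1 = σ a := fun a => rfl
    have htmem : t ∈ outAG (lastS s h.1) τ0 := by
      have : t ∈ dout outAG Set.univ (lastS s h.1) σ := by rw [hts]; rfl
      obtain ⟨τ, hext, ht⟩ := this
      have : τ = τ0 := by
        funext b
        exact hext ⟨b, Set.mem_univ b⟩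
      rwa [this] at ht
    refine ⟨extHist h τ0 t htmem, ?_⟩
    ext h'
    constructor
    · rintro ⟨τ, hext, t', ht', he⟩
      have hττ0 : τ = τ0 := by
        funext b
        exact hext ⟨b, Set.mem_univ b⟩
      subst hττ0
      have : t' ∈ dout outAG Set.univ (lastS s h.1) σ := ⟨τ0, hext, ht'⟩
      rw [hts, Set.mem_singleton_iff] at this
      subst this
      exact Set.mem_singleton_iff.mpr (Subtype.ext he)
    · rintro rfl
      exact ⟨τ0, hext0, t, htmem, rfl⟩
  · -- same formulas
    intro φ
    exact gsat_tout outAG lab s φ ⟨[], trivial⟩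
end
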